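/- arXiv:2309.00539 — 3 statements merged into one kernel-verified Lean document; each statement's English description precedes it below -/
import Mathlib

section
/- The improper integral ∫_0^∞ (ln u)² ln(1+u)/(u(1+u)) du equals 7·ζ(4) = 7π⁴/90. -/
/-!
Split the integral at `1` and fold `(1, ∞)` onto `(0, 1)` by `u ↦ 1/u`. Since
`log (1 + 1/y) = log (1 + y) - log y` and `1/(y(1+y)) + 1/(1+y) = 1/y`, the integral becomes
`∫₀¹ (log y)² log (1 + y) / y - (log y)³ / (1 + y)`. Expanding `log (1 + y) / y` and
`1 / (1 + y)` in powers of `y` and integrating termwise with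
`∫₀¹ yⁿ (log y)ᵏ = (-1)ᵏ k! / (n + 1)ᵏ⁺¹` gives `2 η(4) + 6 η(4)`, where
`η(4) = ∑ (-1)ⁿ / (n + 1)⁴ = (7/8) ζ(4)`.
-/

open Real Set MeasureTheory

lemma hasSum_neg_one_pow_div_add_one_pow {p : ℕ} {z : ℝ}
    (h : HasSum (fun n : ℕ => 1 / ((n : ℝ) + 1) ^ p) z) :
    HasSum (fun n : ℕ => (-1) ^ n / ((n : ℝ) + 1) ^ p) ((1 - 2 / 2 ^ p) * z) := by
  set a : ℕ → ℝ := fun n => 1 / ((n : ℝ) + 1) ^ p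
  have hodd : HasSum (fun m => a (2 * m + 1)) (z / 2 ^ p) := by
    refine (h.div_const (2 ^ p)).congr_fun fun m => ?_
    simp only [a]
    push_cast
    rw [show (2 * m + 1 + 1 : ℝ) = 2 * (m + 1) by ring, mul_pow, div_div, mul_comm]
  have heven : HasSum (fun m => a (2 * m)) (z - z / 2 ^ p) := by
    have hs := (h.summable.comp_injective (mul_right_injective₀ two_ne_zero)).hasSum
    rwa [eq_sub_of_add_eq ((HasSum.even_add_odd (f := a) hs hodd).unique h)] at hs
  convert HasSum.even_add_odd (f := fun n : ℕ => (-1) ^ n / ((n : ℝ) + 1) ^ p)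
    (heven.congr_fun fun m => ?_) (hodd.neg.congr_fun fun m => ?_) using 1
  · ring
  · simp [a, pow_mul]
  · simp [a, pow_succ, pow_mul, neg_div]

lemma hasSum_one_div_add_one_pow_four :
    HasSum (fun n : ℕ => 1 / ((n : ℝ) + 1) ^ 4) (π ^ 4 / 90) := by
  simpa using (hasSum_nat_add_iff' 1).mpr hasSum_zeta_four

lemma hasSum_neg_one_pow_div_add_one_pow_four :
    HasSum (fun n : ℕ => (-1) ^ n / ((n : ℝ) + 1) ^ 4) (7 * π ^ 4 / 720) := by
  convert hasSum_neg_one_pow_div_add_one_pow hasSum_one_div_add_one_pow_four using 1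
  ring

section Substitution

variable {E : Type*} [NormedAddCommGroup E] [NormedSpace ℝ E]

lemma image_exp_neg_Ioi_zero : (fun t : ℝ => exp (-t)) '' Ioi 0 = Ioo 0 1 := by
  ext y
  constructor
  · rintro ⟨t, ht, rfl⟩
    exact ⟨exp_pos _, exp_lt_one_iff.mpr (neg_lt_zero.mpr ht)⟩
  · rintro ⟨hy₀, hy₁⟩
    exact ⟨-log y, neg_pos.mpr (log_neg hy₀ hy₁), by simp [exp_log hy₀]⟩

lemma integral_Ioo_zero_one_eq_integral_comp_exp_neg (g : ℝ → E) :
    ∫ y in Ioo 0 1, g y = ∫ t in Ioi 0, exp (-t) • g (exp (-t)) := by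
  rw [← image_exp_neg_Ioi_zero, integral_image_eq_integral_abs_deriv_smul measurableSet_Ioi
    (fun t _ => (hasDerivAt_neg t).exp.hasDerivWithinAt)
    (fun a _ b _ h => neg_injective (exp_injective h))]
  simp only [mul_neg_one, abs_neg, abs_of_pos (exp_pos _)]

lemma image_inv_Ioo_zero_one : (fun y : ℝ => y⁻¹) '' Ioo 0 1 = Ioi 1 := by
  rw [image_inv_eq_inv, inv_Ioo_0_left one_pos, inv_one]

lemma integral_Ioi_eq_integral_Ioo_add_comp_inv {f : ℝ → E}
    (hf : IntegrableOn f (Ioo 0 1))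
    (hf_inv : IntegrableOn (fun y => (y ^ 2)⁻¹ • f y⁻¹) (Ioo 0 1)) :
    ∫ x in Ioi 0, f x = ∫ y in Ioo 0 1, (f y + (y ^ 2)⁻¹ • f y⁻¹) := by
  have hinv : ∀ y ∈ Ioo (0 : ℝ) 1,
      HasDerivWithinAt (fun y => y⁻¹) (-(y ^ 2)⁻¹) (Ioo 0 1) y :=
    fun y hy => (hasDerivAt_inv hy.1.ne').hasDerivWithinAt
  have hinj : InjOn (fun y : ℝ => y⁻¹) (Ioo 0 1) := fun a _ b _ h => inv_injective h
  have habs : ∀ y : ℝ, |-(y ^ 2)⁻¹| = (y ^ 2)⁻¹ := fun y => by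
    rw [abs_neg, abs_of_nonneg (by positivity)]
  have hf_Ioi : IntegrableOn f (Ioi 1) := by
    rw [← image_inv_Ioo_zero_one, integrableOn_image_iff_integrableOn_abs_deriv_smul
      measurableSet_Ioo hinv hinj]
    simpa only [habs] using hf_inv
  rw [← Ioc_union_Ioi_eq_Ioi zero_le_one, setIntegral_union (Ioc_disjoint_Ioi le_rfl)
    measurableSet_Ioi (Iff.mpr integrableOn_Ioc_iff_integrableOn_Ioo hf) hf_Ioi,
    integral_Ioc_eq_integral_Ioo, ← image_inv_Ioo_zero_one,
    integral_image_eq_integral_abs_deriv_smul measurableSet_Ioo hinv hinj,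
    integral_add hf hf_inv]
  simp only [habs]

end Substitution

lemma integral_Ioo_rpow_mul_log_pow {s : ℝ} (hs : -1 < s) (k : ℕ) :
    ∫ y in Ioo 0 1, y ^ s * log y ^ k = (-1) ^ k * k.factorial / (s + 1) ^ (k + 1) := by
  have hs₁ : 0 < s + 1 := by linarith
  have h : ∀ t ∈ Ioi (0 : ℝ), exp (-t) • (exp (-t) ^ s * log (exp (-t)) ^ k)
      = (-1) ^ k * (t ^ ((k + 1 : ℕ) - 1 : ℝ) * exp (-((s + 1) * t))) := by
    intro t _
    have hexp : exp (-((s + 1) * t)) = exp (-t) * exp (-t * s) := by rw [← exp_add]; ring_nf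
    rw [smul_eq_mul, log_exp, ← exp_mul, hexp, neg_pow, Nat.cast_add_one, add_sub_cancel_right,
      rpow_natCast]
    ring
  rw [integral_Ioo_zero_one_eq_integral_comp_exp_neg, setIntegral_congr_fun measurableSet_Ioi h,
    integral_const_mul, integral_rpow_mul_exp_neg_mul_Ioi (by positivity) hs₁,
    rpow_natCast, Nat.cast_add_one, Gamma_nat_eq_factorial, div_pow, one_pow]
  ring

lemma integrableOn_Ioo_rpow_mul_log_pow {s : ℝ} (hs : -1 < s) (k : ℕ) :
    IntegrableOn (fun y => y ^ s * log y ^ k) (Ioo 0 1) := by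
  refine Integrable.of_integral_ne_zero ?_
  rw [integral_Ioo_rpow_mul_log_pow hs]
  have : 0 < s + 1 := by linarith
  positivity

lemma integral_Ioo_pow_mul_log_pow (n k : ℕ) :
    ∫ y in Ioo 0 1, y ^ n * log y ^ k = (-1) ^ k * k.factorial / ((n : ℝ) + 1) ^ (k + 1) := by
  simpa using integral_Ioo_rpow_mul_log_pow (s := n) (by linarith [n.cast_nonneg (α := ℝ)]) k

lemma integrableOn_Ioo_pow_mul_log_pow (n k : ℕ) :
    IntegrableOn (fun y : ℝ => y ^ n * log y ^ k) (Ioo 0 1) := by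
  simpa using integrableOn_Ioo_rpow_mul_log_pow (s := n) (by linarith [n.cast_nonneg (α := ℝ)]) k

lemma integrableOn_Ioo_log_pow (k : ℕ) : IntegrableOn (fun y => log y ^ k) (Ioo 0 1) := by
  simpa using integrableOn_Ioo_pow_mul_log_pow 0 k

lemma hasSum_integral_Ioo_log_pow_mul {c : ℕ → ℝ} {f : ℝ → ℝ} (k : ℕ)
    (hf : ∀ y ∈ Ioo (0 : ℝ) 1, HasSum (fun n => c n * y ^ n) (f y))
    (hc : Summable fun n => |c n| / ((n : ℝ) + 1) ^ (k + 1)) :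
    HasSum (fun n => (-1) ^ k * k.factorial * (c n / ((n : ℝ) + 1) ^ (k + 1)))
      (∫ y in Ioo 0 1, log y ^ k * f y) := by
  set F : ℕ → ℝ → ℝ := fun n y => c n * (y ^ n * log y ^ k)
  have hF_int : ∀ n, IntegrableOn (F n) (Ioo 0 1) :=
    fun n => (integrableOn_Ioo_pow_mul_log_pow n k).const_mul (c n)
  have hF_norm : ∀ n,
      ∫ y in Ioo 0 1, ‖F n y‖ = k.factorial * (|c n| / ((n : ℝ) + 1) ^ (k + 1)) := by
    intro n
    have h : ∀ y ∈ Ioo (0 : ℝ) 1, ‖F n y‖ = (-1) ^ k * |c n| * (y ^ n * log y ^ k) := by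
      rintro y ⟨hy₀, hy₁⟩
      rw [Real.norm_eq_abs, abs_mul, abs_mul, abs_pow, abs_pow, abs_of_pos hy₀,
        abs_of_neg (log_neg hy₀ hy₁), neg_pow]
      ring
    rw [setIntegral_congr_fun measurableSet_Ioo h, integral_const_mul,
      integral_Ioo_pow_mul_log_pow]
    have hsq : ((-1 : ℝ) ^ k) * (-1) ^ k = 1 := by rw [← mul_pow]; norm_num
    linear_combination (|c n| * k.factorial / ((n : ℝ) + 1) ^ (k + 1)) * hsq
  have hsum := hasSum_integral_of_summable_integral_norm hF_int
    (by simpa only [hF_norm] using hc.mul_left _)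
  have hF_tsum : ∀ y ∈ Ioo (0 : ℝ) 1, ∑' n, F n y = log y ^ k * f y := fun y hy => by
    rw [mul_comm, ← ((hf y hy).mul_right (log y ^ k)).tsum_eq]
    simp only [F, mul_assoc]
  rw [← setIntegral_congr_fun measurableSet_Ioo hF_tsum]
  refine hsum.congr_fun fun n => ?_
  rw [integral_const_mul, integral_Ioo_pow_mul_log_pow]
  ring

lemma hasSum_log_one_add_div {y : ℝ} (hy₀ : y ≠ 0) (hy₁ : |y| < 1) :
    HasSum (fun n : ℕ => (-1) ^ n / ((n : ℝ) + 1) * y ^ n) (log (1 + y) / y) := by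
  have h := (hasSum_pow_div_log_of_abs_lt_one (x := -y) (by rwa [abs_neg])).div_const (-y)
  rw [sub_neg_eq_add, neg_div_neg_eq] at h
  refine h.congr_fun fun n => ?_
  field_simp
  ring

lemma integral_Ioo_log_sq_mul_log_one_add_div :
    ∫ y in Ioo 0 1, log y ^ 2 * (log (1 + y) / y) = 7 * π ^ 4 / 360 := by
  have hc : Summable fun n : ℕ => |(-1) ^ n / ((n : ℝ) + 1)| / ((n : ℝ) + 1) ^ 3 := by
    refine hasSum_one_div_add_one_pow_four.summable.congr fun n => ?_
    rw [abs_div, abs_pow, abs_neg, abs_one, one_pow, abs_of_pos (by positivity), div_div]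
    ring
  rw [show 7 * π ^ 4 / 360 = 2 * (7 * π ^ 4 / 720) by ring]
  refine (hasSum_integral_Ioo_log_pow_mul 2 (fun y hy => hasSum_log_one_add_div hy.1.ne'
    (by rw [abs_of_pos hy.1]; exact hy.2)) hc).unique
    ((hasSum_neg_one_pow_div_add_one_pow_four.mul_left 2).congr_fun fun n => ?_)
  field_simp
  norm_num [Nat.factorial]
  ring

lemma integral_Ioo_log_pow_three_mul_inv_one_add :
    ∫ y in Ioo 0 1, log y ^ 3 * (1 + y)⁻¹ = -(7 * π ^ 4 / 120) := by
  have hc : Summable fun n : ℕ => |(-1 : ℝ) ^ n| / ((n : ℝ) + 1) ^ 4 := by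
    simpa using hasSum_one_div_add_one_pow_four.summable
  rw [show -(7 * π ^ 4 / 120) = -6 * (7 * π ^ 4 / 720) by ring]
  refine (hasSum_integral_Ioo_log_pow_mul 3 (c := fun n => (-1) ^ n) (fun y hy => ?_) hc).unique
    ((hasSum_neg_one_pow_div_add_one_pow_four.mul_left (-6)).congr_fun fun n => ?_)
  · simpa [← neg_pow, sub_neg_eq_add] using
      hasSum_geometric_of_abs_lt_one (r := -y) (by rw [abs_neg, abs_of_pos hy.1]; exact hy.2)
  · norm_num [Nat.factorial]

lemma norm_inv_one_add_le_one {y : ℝ} (hy : 0 ≤ y) : ‖(1 + y)⁻¹‖ ≤ 1 := by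
  rw [norm_inv, Real.norm_of_nonneg (by positivity)]
  exact inv_le_one_of_one_le₀ (by linarith)

lemma norm_log_one_add_div_le_one {y : ℝ} (hy : 0 < y) : ‖log (1 + y) / y‖ ≤ 1 := by
  have hlog : 0 ≤ log (1 + y) := log_nonneg (by linarith)
  rw [Real.norm_of_nonneg (by positivity), div_le_one hy]
  linarith [log_le_sub_one_of_pos (by linarith : 0 < 1 + y)]

lemma integrableOn_Ioo_log_sq_mul_log_one_add_div :
    IntegrableOn (fun y => log y ^ 2 * (log (1 + y) / y)) (Ioo 0 1) :=
  (integrableOn_Ioo_log_pow 2).mul_bdd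
    (by fun_prop : Measurable fun y : ℝ => log (1 + y) / y).aestronglyMeasurable
    (ae_restrict_of_forall_mem measurableSet_Ioo fun _ hy => norm_log_one_add_div_le_one hy.1)

lemma integrableOn_Ioo_log_pow_three_mul_inv_one_add :
    IntegrableOn (fun y => log y ^ 3 * (1 + y)⁻¹) (Ioo 0 1) :=
  (integrableOn_Ioo_log_pow 3).mul_bdd (by fun_prop)
    (ae_restrict_of_forall_mem measurableSet_Ioo fun _ hy => norm_inv_one_add_le_one hy.1.le)

lemma integrableOn_Ioo_log_sq_mul_log_one_add_div_mul_one_add :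
    IntegrableOn (fun y => log y ^ 2 * log (1 + y) / (y * (1 + y))) (Ioo 0 1) := by
  refine IntegrableOn.congr_fun
    (integrableOn_Ioo_log_sq_mul_log_one_add_div.mul_bdd (by fun_prop)
      (ae_restrict_of_forall_mem measurableSet_Ioo fun _ hy => norm_inv_one_add_le_one hy.1.le))
    (fun y _ => ?_) measurableSet_Ioo
  field_simp

lemma log_sq_mul_log_one_add_div_mul_one_add_add_comp_inv {y : ℝ} (hy : 0 < y) :
    log y ^ 2 * log (1 + y) / (y * (1 + y))
        + (y ^ 2)⁻¹ * (log y⁻¹ ^ 2 * log (1 + y⁻¹) / (y⁻¹ * (1 + y⁻¹)))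
      = log y ^ 2 * (log (1 + y) / y) - log y ^ 3 * (1 + y)⁻¹ := by
  have hlog : log (1 + y⁻¹) = log (1 + y) - log y := by
    rw [← log_div (by positivity) hy.ne', add_div, div_self hy.ne', one_div, add_comm]
  rw [log_inv, hlog]
  field_simp
  ring

theorem zeta4_integral_Ioi :
    ∫ u in Set.Ioi (0 : ℝ), (Real.log u) ^ 2 * Real.log (1 + u) / (u * (1 + u)) =
      7 * Real.pi ^ 4 / 90 := by
  set f : ℝ → ℝ := fun u => log u ^ 2 * log (1 + u) / (u * (1 + u))
  have hfold : ∀ y ∈ Ioo (0 : ℝ) 1, f y + (y ^ 2)⁻¹ • f y⁻¹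
      = log y ^ 2 * (log (1 + y) / y) - log y ^ 3 * (1 + y)⁻¹ :=
    fun y hy => log_sq_mul_log_one_add_div_mul_one_add_add_comp_inv hy.1
  have hA := integrableOn_Ioo_log_sq_mul_log_one_add_div
  have hB := integrableOn_Ioo_log_pow_three_mul_inv_one_add
  have hf : IntegrableOn f (Ioo 0 1) := integrableOn_Ioo_log_sq_mul_log_one_add_div_mul_one_add
  have hf_inv : IntegrableOn (fun y => (y ^ 2)⁻¹ • f y⁻¹) (Ioo 0 1) :=
    ((hA.sub hB).sub hf).congr_fun (fun y hy => by simp only [Pi.sub_apply, ← hfold y hy]; ring)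
      measurableSet_Ioo
  rw [integral_Ioi_eq_integral_Ioo_add_comp_inv hf hf_inv,
    setIntegral_congr_fun measurableSet_Ioo hfold, integral_sub hA hB,
    integral_Ioo_log_sq_mul_log_one_add_div, integral_Ioo_log_pow_three_mul_inv_one_add]
  ring
end

section
/- The integral ∫_0^1 (ln t)² ln(1−t)/t dt equals −2·ζ(4) = −π⁴/45. -/
/-! The substitution `t = exp (-u)` turns `∫₀¹ tⁿ (log t)² dt` into a Gamma integral, equal to
`Γ(3) / (n + 1)³ = 2 / (n + 1)³`. Expanding `-log (1 - t) / t = ∑ tⁿ / (n + 1)` writes the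
integrand as minus a series of nonnegative integrable terms, so the series may be integrated
termwise, giving `-2 ∑ 1 / (n + 1)⁴ = -2 ζ(4) = -π⁴ / 45`. -/

open Real MeasureTheory Set

section ExpNegSubstitution

variable {E : Type*} [NormedAddCommGroup E] [NormedSpace ℝ E]

lemma image_exp_neg_Ioi : (fun u : ℝ ↦ exp (-u)) '' Ioi 0 = Ioo 0 1 := by
  ext t
  constructor
  · rintro ⟨u, hu, rfl⟩
    exact ⟨exp_pos _, exp_lt_one_iff.mpr (neg_lt_zero.mpr hu)⟩
  · rintro ⟨ht0, ht1⟩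
    exact ⟨-log t, neg_pos.mpr (log_neg ht0 ht1), by simp [exp_log ht0]⟩

lemma injOn_exp_neg : InjOn (fun u : ℝ ↦ exp (-u)) (Ioi 0) :=
  fun _ _ _ _ h ↦ neg_injective (exp_injective h)

lemma hasDerivAt_exp_neg (u : ℝ) : HasDerivAt (fun u ↦ exp (-u)) (-exp (-u)) u := by
  simpa using (hasDerivAt_neg u).exp

theorem integral_comp_exp_neg_Ioi (g : ℝ → E) :
    ∫ u in Ioi 0, exp (-u) • g (exp (-u)) = ∫ t in Ioo 0 1, g t := by
  rw [← image_exp_neg_Ioi]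
  simpa [abs_of_pos (exp_pos _)] using (integral_image_eq_integral_abs_deriv_smul
    measurableSet_Ioi (fun u _ ↦ (hasDerivAt_exp_neg u).hasDerivWithinAt) injOn_exp_neg g).symm

theorem integrableOn_comp_exp_neg_Ioi (g : ℝ → E) :
    IntegrableOn (fun u ↦ exp (-u) • g (exp (-u))) (Ioi 0) ↔ IntegrableOn g (Ioo 0 1) := by
  rw [← image_exp_neg_Ioi]
  simpa [abs_of_pos (exp_pos _)] using (integrableOn_image_iff_integrableOn_abs_deriv_smul
    measurableSet_Ioi (fun u _ ↦ (hasDerivAt_exp_neg u).hasDerivWithinAt) injOn_exp_neg g).symm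

end ExpNegSubstitution

section MellinLog

variable {s a : ℝ}

lemma exp_neg_mul_rpow_mul_rpow (u : ℝ) :
    exp (-u) * (exp (-u) ^ s * (-log (exp (-u))) ^ a) = u ^ a * exp (-((s + 1) * u)) := by
  rw [log_exp, neg_neg, ← exp_mul, ← mul_assoc, ← exp_add]
  ring_nf

lemma integrableOn_rpow_mul_neg_log_rpow (hs : -1 < s) (ha : -1 < a) :
    IntegrableOn (fun t ↦ t ^ s * (-log t) ^ a) (Ioo 0 1) := by
  rw [← integrableOn_comp_exp_neg_Ioi]
  refine (integrableOn_rpow_mul_exp_neg_mul_rpow ha one_pos (neg_lt_iff_pos_add.mp hs)).congr_fun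
    (fun u _ ↦ ?_) measurableSet_Ioi
  simp only [smul_eq_mul, exp_neg_mul_rpow_mul_rpow u, rpow_one, neg_mul]

theorem integral_rpow_mul_neg_log_rpow (hs : -1 < s) (ha : -1 < a) :
    ∫ t in Ioo 0 1, t ^ s * (-log t) ^ a = Gamma (a + 1) / (s + 1) ^ (a + 1) := by
  have hs' : 0 < s + 1 := by linarith
  have hGamma := integral_rpow_mul_exp_neg_mul_Ioi (a := a + 1) (by linarith) hs'
  rw [add_sub_cancel_right, div_rpow zero_le_one hs'.le, one_rpow] at hGamma
  rw [← integral_comp_exp_neg_Ioi]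
  simp only [smul_eq_mul, exp_neg_mul_rpow_mul_rpow, hGamma]
  ring

end MellinLog

lemma integral_tsum_of_nonneg_of_hasSum {α ι : Type*} [MeasurableSpace α] {μ : Measure α}
    [Countable ι] {F : ι → α → ℝ} {I : ℝ} (hF_int : ∀ i, Integrable (F i) μ)
    (hF_nonneg : ∀ i, 0 ≤ᵐ[μ] F i) (hI : HasSum (fun i ↦ ∫ a, F i a ∂μ) I) :
    ∫ a, ∑' i, F i a ∂μ = I := by
  have hnorm (i : ι) : ∫ a, ‖F i a‖ ∂μ = ∫ a, F i a ∂μ :=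
    integral_congr_ae ((hF_nonneg i).mono fun _ h ↦ Real.norm_of_nonneg h)
  exact (hasSum_integral_of_summable_integral_norm hF_int
    (by simpa only [hnorm] using hI.summable)).unique hI

lemma integrableOn_pow_mul_log_sq (n : ℕ) :
    IntegrableOn (fun t ↦ t ^ n * log t ^ 2) (Ioo 0 1) := by
  simpa [rpow_natCast, rpow_two] using
    integrableOn_rpow_mul_neg_log_rpow (s := n) (a := 2)
      (neg_one_lt_zero.trans_le n.cast_nonneg) (by norm_num)

lemma integral_pow_mul_log_sq (n : ℕ) :
    ∫ t in Ioo 0 1, t ^ n * log t ^ 2 = 2 / ((n : ℝ) + 1) ^ 3 := by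
  have h := integral_rpow_mul_neg_log_rpow (s := n) (a := 2)
    (neg_one_lt_zero.trans_le n.cast_nonneg) (by norm_num)
  have hGamma : Gamma (2 + 1) = 2 := by
    rw [show (2 : ℝ) + 1 = (2 : ℕ) + 1 by norm_num, Gamma_nat_eq_factorial]
    norm_num
  have hpow : ((n : ℝ) + 1) ^ ((2 : ℝ) + 1) = ((n : ℝ) + 1) ^ 3 := by
    rw [← rpow_natCast]
    norm_num
  rw [hGamma, hpow] at h
  simpa [rpow_natCast, rpow_two] using h

lemma hasSum_pow_div_succ {t : ℝ} (h0 : t ≠ 0) (h1 : |t| < 1) :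
    HasSum (fun n : ℕ ↦ t ^ n / (n + 1)) (-log (1 - t) / t) :=
  ((hasSum_pow_div_log_of_abs_lt_one h1).div_const t).congr_fun fun n ↦ by
    rw [pow_succ]
    field_simp

lemma hasSum_one_div_succ_pow_four :
    HasSum (fun n : ℕ ↦ 1 / ((n : ℝ) + 1) ^ 4) (π ^ 4 / 90) := by
  have := (hasSum_nat_add_iff (f := fun n : ℕ ↦ 1 / (n : ℝ) ^ 4) 1).mpr
    (by simpa using hasSum_zeta_four)
  exact_mod_cast this

lemma hasSum_pow_mul_log_sq_div_succ {t : ℝ} (ht : t ∈ Ioo 0 1) :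
    HasSum (fun n : ℕ ↦ t ^ n * log t ^ 2 / (n + 1)) (-(log t ^ 2 * log (1 - t) / t)) := by
  have hsum := (hasSum_pow_div_succ ht.1.ne' (abs_lt.mpr ⟨by linarith [ht.1], ht.2⟩)).mul_left
    (log t ^ 2)
  rw [show -(log t ^ 2 * log (1 - t) / t) = log t ^ 2 * (-log (1 - t) / t) by ring]
  exact hsum.congr_fun fun n ↦ by ring

theorem integral_log_sq_log_one_sub_div :
    ∫ t in Set.Ioo (0 : ℝ) 1, (Real.log t) ^ 2 * Real.log (1 - t) / t =
      -(Real.pi ^ 4 / 45) := by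
  set F : ℕ → ℝ → ℝ := fun n t ↦ t ^ n * log t ^ 2 / (n + 1)
  have hF_int (n : ℕ) : IntegrableOn (F n) (Ioo 0 1) :=
    (integrableOn_pow_mul_log_sq n).div_const _
  have hF_nonneg (n : ℕ) : 0 ≤ᵐ[volume.restrict (Ioo 0 1)] F n :=
    (ae_restrict_mem measurableSet_Ioo).mono fun t ht ↦
      div_nonneg (mul_nonneg (pow_nonneg ht.1.le _) (sq_nonneg _)) n.cast_add_one_pos.le
  have hF_sum : HasSum (fun n ↦ ∫ t in Ioo 0 1, F n t) (π ^ 4 / 45) := by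
    rw [show π ^ 4 / 45 = 2 * (π ^ 4 / 90) by ring]
    refine (hasSum_one_div_succ_pow_four.mul_left 2).congr_fun fun n ↦ ?_
    rw [integral_div, integral_pow_mul_log_sq]
    field_simp
  calc ∫ t in Ioo 0 1, log t ^ 2 * log (1 - t) / t = ∫ t in Ioo 0 1, -∑' n, F n t :=
        setIntegral_congr_fun measurableSet_Ioo fun t ht ↦ by
          rw [(hasSum_pow_mul_log_sq_div_succ ht).tsum_eq, neg_neg]
    _ = -(π ^ 4 / 45) := by
        rw [integral_neg, integral_tsum_of_nonneg_of_hasSum hF_int hF_nonneg hF_sum]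
end

section
/- The improper integral of z⁴ · ln(1+e^z)/(1+e^z) over the whole real line equals (279/2)·ζ(6), i.e. ∫_{-∞}^{+∞} z⁴ ln(1+eᶻ)/(1+eᶻ) dz = (279/2)·π⁶/945. -/
/-!
Writing `F(z) = z⁴ log(1 + eᶻ) / (1 + eᶻ)`, the identity `log(1 + eᶻ) = z + log(1 + e⁻ᶻ)` gives
`F(z) + F(-z) = z⁴ log(1 + e⁻ᶻ) + z⁵ e⁻ᶻ / (1 + e⁻ᶻ)`, so `∫ F = ∫₀^∞ (F(z) + F(-z)) dz`.
For `z > 0` both terms expand in alternating power series in `e⁻ᶻ`; integrating termwise with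
`∫₀^∞ zᵏ e^{-cz} dz = k! / c^{k+1}` gives `6 · 4! · ∑ (-1)ⁿ / (n+1)⁶ = 144 · (31/32) ζ(6)`.
The argument works verbatim for every even power `zᵏ`.
-/

open Real MeasureTheory Set
open scoped Nat

lemma integrableOn_pow_mul_exp_neg_mul_Ioi (k : ℕ) {c : ℝ} (hc : 0 < c) :
    IntegrableOn (fun z : ℝ => z ^ k * exp (-(c * z))) (Ioi 0) := by
  refine (integrableOn_rpow_mul_exp_neg_mul_rpow (p := 1) (s := k)
    (by linarith [k.cast_nonneg (α := ℝ)]) one_pos hc).congr_fun (fun z _ => ?_) measurableSet_Ioi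
  simp [Real.rpow_natCast]

lemma integral_pow_mul_exp_neg_mul_Ioi (k : ℕ) {c : ℝ} (hc : 0 < c) :
    ∫ z in Ioi 0, z ^ k * exp (-(c * z)) = k ! / c ^ (k + 1) := by
  have h := integral_rpow_mul_exp_neg_mul_Ioi (a := k + 1) (by positivity) hc
  rw [add_sub_cancel_right, Real.Gamma_nat_eq_factorial, ← Nat.cast_add_one,
    Real.rpow_natCast] at h
  simp only [Real.rpow_natCast] at h
  rw [h, div_pow, one_pow]
  ring

lemma integrableOn_pow_div_add_pow_succ_mul_exp_neg_mul_Ioi (k : ℕ) {c : ℝ} (hc : 0 < c) :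
    IntegrableOn (fun z : ℝ => (z ^ k / c + z ^ (k + 1)) * exp (-(c * z))) (Ioi 0) := by
  simp only [add_mul, div_mul_eq_mul_div]
  exact ((integrableOn_pow_mul_exp_neg_mul_Ioi k hc).div_const c).add
    (integrableOn_pow_mul_exp_neg_mul_Ioi (k + 1) hc)

lemma integral_pow_div_add_pow_succ_mul_exp_neg_mul_Ioi (k : ℕ) {c : ℝ} (hc : 0 < c) :
    ∫ z in Ioi 0, (z ^ k / c + z ^ (k + 1)) * exp (-(c * z)) = (k + 2) * k ! / c ^ (k + 2) := by
  simp only [add_mul, div_mul_eq_mul_div]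
  rw [integral_add ((integrableOn_pow_mul_exp_neg_mul_Ioi k hc).div_const c)
    (integrableOn_pow_mul_exp_neg_mul_Ioi (k + 1) hc), integral_div,
    integral_pow_mul_exp_neg_mul_Ioi k hc, integral_pow_mul_exp_neg_mul_Ioi (k + 1) hc,
    Nat.factorial_succ]
  push_cast
  field_simp
  ring

lemma integrableOn_pow_add_pow_succ_mul_exp_neg_Ioi (k : ℕ) :
    IntegrableOn (fun z : ℝ => (z ^ k + z ^ (k + 1)) * exp (-z)) (Ioi 0) := by
  simpa using integrableOn_pow_div_add_pow_succ_mul_exp_neg_mul_Ioi k one_pos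

lemma integral_eq_integral_Ioi_add_comp_neg {E : Type*} [NormedAddCommGroup E] [NormedSpace ℝ E]
    {f : ℝ → E} (hf : IntegrableOn f (Ioi 0)) (hf_neg : IntegrableOn (fun x => f (-x)) (Ioi 0)) :
    ∫ x, f x = ∫ x in Ioi 0, (f x + f (-x)) := by
  have hf_Iic : IntegrableOn f (Iic 0) := by
    have hneg : MeasurableEmbedding fun x : ℝ => -x := (Homeomorph.neg ℝ).measurableEmbedding
    rw [← Measure.map_neg_eq_self (volume : Measure ℝ), hneg.integrableOn_map_iff]
    simp_rw [neg_preimage, neg_Iic, neg_zero]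
    exact Iff.mpr integrableOn_Ici_iff_integrableOn_Ioi hf_neg
  rw [integral_add hf hf_neg, integral_comp_neg_Ioi, neg_zero, add_comm, ← setIntegral_union
    (Iic_disjoint_Ioi le_rfl) measurableSet_Ioi hf_Iic hf, Iic_union_Ioi, Measure.restrict_univ]

theorem hasSum_log_one_add_of_abs_lt_one {x : ℝ} (h : |x| < 1) :
    HasSum (fun n : ℕ => (-1) ^ n * (x ^ (n + 1) / (n + 1))) (log (1 + x)) := by
  have := (hasSum_pow_div_log_of_abs_lt_one (x := -x) (by rwa [abs_neg])).neg
  simp only [sub_neg_eq_add, neg_neg] at this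
  refine this.congr_fun fun n => ?_
  rw [neg_pow, pow_succ]
  ring

theorem hasSum_div_one_add_of_abs_lt_one {x : ℝ} (h : |x| < 1) :
    HasSum (fun n : ℕ => (-1) ^ n * x ^ (n + 1)) (x / (1 + x)) := by
  have := (hasSum_geometric_of_abs_lt_one (r := -x) (by rwa [abs_neg])).mul_left x
  rw [sub_neg_eq_add, ← div_eq_mul_inv] at this
  refine this.congr_fun fun n => ?_
  rw [neg_pow]
  ring

/-- The alternating series is the full series minus twice its odd-indexed part, and the
odd-indexed part is `2⁻ˢ` times the full series. -/
theorem hasSum_neg_one_pow_div_succ_pow {s : ℕ} (hs : s ≠ 0) {a : ℝ}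
    (h : HasSum (fun n : ℕ => 1 / (n : ℝ) ^ s) a) :
    HasSum (fun n : ℕ => (-1) ^ n / ((n : ℝ) + 1) ^ s) ((1 - 2 / 2 ^ s) * a) := by
  have hsucc : HasSum (fun n : ℕ => 1 / ((n : ℝ) + 1) ^ s) a := by
    simpa [hs] using (hasSum_nat_add_iff' (f := fun n : ℕ => 1 / (n : ℝ) ^ s) 1).2 h
  set g : ℕ → ℝ := fun n => if Odd n then 1 / ((n : ℝ) + 1) ^ s else 0
  have hg : HasSum g (a / 2 ^ s) := by
    have heven : HasSum (fun n => g (2 * n)) 0 := by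
      convert hasSum_zero with n
      simp [g]
    have hodd : HasSum (fun n => g (2 * n + 1)) (a / 2 ^ s) := by
      refine (hsucc.div_const (2 ^ s)).congr_fun fun n => ?_
      simp only [g, odd_two_mul_add_one, if_true]
      push_cast
      rw [show 2 * (n : ℝ) + 1 + 1 = 2 * (n + 1) by ring, mul_pow]
      field_simp
    simpa using heven.even_add_odd hodd
  have := hsucc.sub (hg.mul_left 2)
  rw [show a - 2 * (a / 2 ^ s) = (1 - 2 / 2 ^ s) * a by ring] at this
  refine this.congr_fun fun n => ?_
  rcases Nat.even_or_odd n with hn | hn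
  · simp [g, hn.neg_one_pow, Nat.not_odd_iff_even.2 hn]
  · simp only [g, hn, hn.neg_one_pow, one_div, if_true]
    ring

theorem hasSum_zeta_six : HasSum (fun n : ℕ => (1 : ℝ) / (n : ℝ) ^ 6) (π ^ 6 / 945) := by
  have h5 : bernoulli' 5 = 0 := by
    rw [bernoulli'_def]
    norm_num [Finset.sum_range_succ, Nat.choose]
  have h6 : bernoulli' 6 = 1 / 42 := by
    rw [bernoulli'_def]
    norm_num [Finset.sum_range_succ, Nat.choose, h5]
  convert hasSum_zeta_nat (k := 3) three_ne_zero using 1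
  rw [bernoulli_eq_bernoulli'_of_ne_one (by norm_num), h6]
  norm_num [Nat.factorial]
  ring

lemma log_one_add_exp (z : ℝ) : log (1 + exp z) = z + log (1 + exp (-z)) := by
  rw [← log_exp z, ← log_mul (exp_pos z).ne' (by positivity), log_exp, mul_add, mul_one,
    ← exp_add, add_neg_cancel, exp_zero, add_comm]

noncomputable def powMulLogOneAddExpDiv (k : ℕ) (z : ℝ) : ℝ :=
  z ^ k * log (1 + exp z) / (1 + exp z)

section

variable {k : ℕ}

@[fun_prop]
lemma continuous_powMulLogOneAddExpDiv (k : ℕ) : Continuous (powMulLogOneAddExpDiv k) := by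
  have h : ∀ z, 1 + exp z ≠ 0 := fun z => by positivity
  unfold powMulLogOneAddExpDiv
  fun_prop (disch := exact h _)

lemma powMulLogOneAddExpDiv_nonneg (hk : Even k) (z : ℝ) : 0 ≤ powMulLogOneAddExpDiv k z := by
  have : 0 ≤ log (1 + exp z) := log_nonneg (by linarith [exp_pos z])
  have := hk.pow_nonneg z
  unfold powMulLogOneAddExpDiv
  positivity

lemma powMulLogOneAddExpDiv_add_comp_neg (hk : Even k) (z : ℝ) :
    powMulLogOneAddExpDiv k z + powMulLogOneAddExpDiv k (-z) =
      z ^ k * log (1 + exp (-z)) + z ^ (k + 1) * (exp (-z) / (1 + exp (-z))) := by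
  have h₁ : exp z * exp (-z) = 1 := by rw [← exp_add, add_neg_cancel, exp_zero]
  have h₂ : 1 + exp z ≠ 0 := by positivity
  have h₃ : 1 + exp (-z) ≠ 0 := by positivity
  unfold powMulLogOneAddExpDiv
  rw [log_one_add_exp z, hk.neg_pow]
  field_simp
  linear_combination (-(z ^ k * (z + log (1 + exp (-z))))) * h₁

lemma powMulLogOneAddExpDiv_add_comp_neg_le (hk : Even k) {z : ℝ} (hz : 0 ≤ z) :
    powMulLogOneAddExpDiv k z + powMulLogOneAddExpDiv k (-z) ≤
      (z ^ k + z ^ (k + 1)) * exp (-z) := by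
  have hlog : log (1 + exp (-z)) ≤ exp (-z) := by
    linarith [log_le_sub_one_of_pos (by positivity : 0 < 1 + exp (-z))]
  have hdiv : exp (-z) / (1 + exp (-z)) ≤ exp (-z) :=
    div_le_self (exp_pos _).le (by linarith [exp_pos (-z)])
  rw [powMulLogOneAddExpDiv_add_comp_neg hk, add_mul]
  gcongr

lemma powMulLogOneAddExpDiv_le (hk : Even k) (z : ℝ) :
    powMulLogOneAddExpDiv k z ≤ (|z| ^ k + |z| ^ (k + 1)) * exp (-|z|) := by
  have hsymm : powMulLogOneAddExpDiv k z ≤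
      powMulLogOneAddExpDiv k |z| + powMulLogOneAddExpDiv k (-|z|) := by
    have := powMulLogOneAddExpDiv_nonneg hk (-z)
    rcases abs_choice z with h | h <;> rw [h]
    · linarith
    · rw [neg_neg]
      linarith
  exact hsymm.trans (powMulLogOneAddExpDiv_add_comp_neg_le hk (abs_nonneg z))

lemma integrableOn_powMulLogOneAddExpDiv_Ioi (hk : Even k) :
    IntegrableOn (powMulLogOneAddExpDiv k) (Ioi 0) := by
  refine (integrableOn_pow_add_pow_succ_mul_exp_neg_Ioi k).mono' (by fun_prop)
    ((ae_restrict_iff' measurableSet_Ioi).2 (ae_of_all _ fun z hz => ?_))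
  rw [norm_of_nonneg (powMulLogOneAddExpDiv_nonneg hk z)]
  simpa [abs_of_pos (mem_Ioi.1 hz)] using powMulLogOneAddExpDiv_le hk z

lemma integrableOn_powMulLogOneAddExpDiv_comp_neg_Ioi (hk : Even k) :
    IntegrableOn (fun z => powMulLogOneAddExpDiv k (-z)) (Ioi 0) := by
  refine (integrableOn_pow_add_pow_succ_mul_exp_neg_Ioi k).mono' (by fun_prop)
    ((ae_restrict_iff' measurableSet_Ioi).2 (ae_of_all _ fun z hz => ?_))
  rw [norm_of_nonneg (powMulLogOneAddExpDiv_nonneg hk (-z))]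
  simpa [abs_of_pos (mem_Ioi.1 hz)] using powMulLogOneAddExpDiv_le hk (-z)

lemma hasSum_powMulLogOneAddExpDiv_add_comp_neg (hk : Even k) {z : ℝ} (hz : 0 < z) :
    HasSum (fun n : ℕ => (-1) ^ n * ((z ^ k / (n + 1) + z ^ (k + 1)) * exp (-((n + 1) * z))))
      (powMulLogOneAddExpDiv k z + powMulLogOneAddExpDiv k (-z)) := by
  have hx : |exp (-z)| < 1 := by
    rw [abs_of_pos (exp_pos _)]
    exact exp_lt_one_iff.2 (neg_lt_zero.2 hz)
  rw [powMulLogOneAddExpDiv_add_comp_neg hk]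
  refine (((hasSum_log_one_add_of_abs_lt_one hx).mul_left (z ^ k)).add
    ((hasSum_div_one_add_of_abs_lt_one hx).mul_left (z ^ (k + 1)))).congr_fun fun n => ?_
  rw [← exp_nat_mul]
  push_cast
  ring_nf

theorem hasSum_integral_powMulLogOneAddExpDiv (hk : Even k) :
    HasSum (fun n : ℕ => (k + 2) * k ! * ((-1) ^ n / ((n : ℝ) + 1) ^ (k + 2)))
      (∫ z, powMulLogOneAddExpDiv k z) := by
  set u : ℕ → ℝ → ℝ :=
    fun n z => (-1) ^ n * ((z ^ k / (n + 1) + z ^ (k + 1)) * exp (-((n + 1) * z)))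
  have hc (n : ℕ) : (0 : ℝ) < n + 1 := n.cast_add_one_pos
  have hu_int (n : ℕ) : IntegrableOn (u n) (Ioi 0) :=
    (integrableOn_pow_div_add_pow_succ_mul_exp_neg_mul_Ioi k (hc n)).const_mul _
  have hu_norm (n : ℕ) :
      ∫ z in Ioi 0, ‖u n z‖ = (k + 2) * k ! * (1 / ((n : ℝ) + 1) ^ (k + 2)) := by
    rw [mul_one_div, ← integral_pow_div_add_pow_succ_mul_exp_neg_mul_Ioi k (hc n)]
    refine setIntegral_congr_fun measurableSet_Ioi fun z hz => ?_
    have : 0 ≤ z := le_of_lt hz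
    simp only [u]
    rw [norm_mul, norm_pow, norm_neg, norm_one, one_pow, one_mul]
    exact norm_of_nonneg (by positivity)
  have hsum : Summable fun n : ℕ => 1 / ((n : ℝ) + 1) ^ (k + 2) := by
    exact_mod_cast (summable_nat_add_iff 1).2
      (Real.summable_one_div_nat_pow.2 (by omega : 1 < k + 2))
  have h_tsum : ∫ z in Ioi 0, (powMulLogOneAddExpDiv k z + powMulLogOneAddExpDiv k (-z)) =
      ∫ z in Ioi 0, ∑' n, u n z :=
    setIntegral_congr_fun measurableSet_Ioi fun z hz =>
      (hasSum_powMulLogOneAddExpDiv_add_comp_neg hk hz).tsum_eq.symm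
  rw [integral_eq_integral_Ioi_add_comp_neg (integrableOn_powMulLogOneAddExpDiv_Ioi hk)
    (integrableOn_powMulLogOneAddExpDiv_comp_neg_Ioi hk), h_tsum]
  refine (hasSum_integral_of_summable_integral_norm hu_int ?_).congr_fun fun n => ?_
  · simpa only [hu_norm] using hsum.mul_left (((k : ℝ) + 2) * k !)
  · rw [integral_const_mul, integral_pow_div_add_pow_succ_mul_exp_neg_mul_Ioi k (hc n)]
    ring

end

theorem zeta6_integral :
    ∫ z : ℝ, z ^ 4 * Real.log (1 + Real.exp z) / (1 + Real.exp z) =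
      (279 / 2) * (Real.pi ^ 6 / 945) := by
  have hI := hasSum_integral_powMulLogOneAddExpDiv (k := 4) (by decide)
  have hη := (hasSum_neg_one_pow_div_succ_pow (by norm_num) hasSum_zeta_six).mul_left
    (((4 : ℕ) + 2) * (4 : ℕ)! : ℝ)
  refine (hI.unique hη).trans ?_
  norm_num [Nat.factorial]
  ring
end
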